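/- arXiv:1509.03783 — 4 statements merged into one kernel-verified Lean document; each statement's English description precedes it below -/
import Mathlib

section
/- Let θ₀, ε ∈ ℝ satisfy ε + θ₀ + 1 > 0 and ε − θ₀ − 1 > 0, and set κ = √(ε²−(1+θ₀)²) and λ = √((ε−θ₀−1)/(ε+θ₀+1)). Let ψ₁, ψ₂ : ℝ → ℝ be differentiable with ψ₁' = (1+θ₀+ε)ψ₂ and ψ₂' = (1+θ₀−ε)ψ₁, and let a < b be reals with ψ₁(a) ≠ 0 and ψ₁(b) ≠ 0. Setting P_a = −ψ₂(a)/ψ₁(a) and P_b = −ψ₂(b)/ψ₁(b), the identity (P_a − P_b)·cos(κ(b−a)) + (λ + P_a·P_b/λ)·sin(κ(b−a)) = 0 holds. -/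
open Real

/-!
Since `λ (1 + θ₀ + ε) = κ` and `λ κ = ε - θ₀ - 1`, the pair `(x, y) = (ψ₁, ψ₂ / λ)` solves the
rotation system `x' = κ y`, `y' = -κ x`, so `(x, y)` turns by the angle `κ (b - a)` from `a` to
`b`. The cross and inner products of its two positions are therefore `-r² sin` and `r² cos` of
that angle, and after clearing the denominators `ψ₁ a ψ₁ b` and `λ` the identity says
`cross · cos + inner · sin = 0`.
-/

theorem sqrt_div_mul_self {p q : ℝ} (hq : 0 < q) : √(p / q) * q = √(p * q) := by
  rw [← sqrt_sq hq.le, ← sqrt_mul' _ (sq_nonneg q), sqrt_sq hq.le]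
  congr 1
  field_simp

section Rotation

variable {κ : ℝ} {x y : ℝ → ℝ}

theorem rotation_fst_eq (hx : ∀ ξ, HasDerivAt x (κ * y ξ) ξ)
    (hy : ∀ ξ, HasDerivAt y (-(κ * x ξ)) ξ) (a b : ℝ) :
    x a = cos (κ * (b - a)) * x b - sin (κ * (b - a)) * y b := by
  let G : ℝ → ℝ := fun ξ => cos (κ * (ξ - a)) * x ξ - sin (κ * (ξ - a)) * y ξ
  have hG : ∀ ξ, HasDerivAt G 0 ξ := fun ξ => by
    have hθ : HasDerivAt (fun ξ => κ * (ξ - a)) κ ξ := by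
      simpa using ((hasDerivAt_id ξ).sub_const a).const_mul κ
    exact ((hθ.cos.mul (hx ξ)).sub (hθ.sin.mul (hy ξ))).congr_deriv (by ring)
  have hGab : G b = G a :=
    is_const_of_deriv_eq_zero (fun ξ => (hG ξ).differentiableAt) (fun ξ => (hG ξ).deriv) b a
  simpa [G] using hGab.symm

theorem rotation_snd_eq (hx : ∀ ξ, HasDerivAt x (κ * y ξ) ξ)
    (hy : ∀ ξ, HasDerivAt y (-(κ * x ξ)) ξ) (a b : ℝ) :
    y a = sin (κ * (b - a)) * x b + cos (κ * (b - a)) * y b := by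
  have hx' : ∀ ξ, HasDerivAt (fun ξ => -x ξ) (-(κ * y ξ)) ξ := fun ξ => (hx ξ).neg
  have hy' : ∀ ξ, HasDerivAt y (κ * -x ξ) ξ := fun ξ => by simpa using hy ξ
  rw [rotation_fst_eq hy' hx' a b]
  ring

theorem rotation_cross_mul_cos_add_inner_mul_sin (hx : ∀ ξ, HasDerivAt x (κ * y ξ) ξ)
    (hy : ∀ ξ, HasDerivAt y (-(κ * x ξ)) ξ) (a b : ℝ) :
    (x a * y b - y a * x b) * cos (κ * (b - a)) +
      (x a * x b + y a * y b) * sin (κ * (b - a)) = 0 := by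
  rw [rotation_fst_eq hx hy a b, rotation_snd_eq hx hy a b]
  ring

end Rotation

theorem dirac_recurrence_identity_general
    (θ₀ ε : ℝ) (h1 : ε + θ₀ + 1 > 0) (h2 : ε - θ₀ - 1 > 0)
    (κ lam : ℝ)
    (hκ : κ = Real.sqrt (ε ^ 2 - (1 + θ₀) ^ 2))
    (hlam : lam = Real.sqrt ((ε - θ₀ - 1) / (ε + θ₀ + 1)))
    (ψ₁ ψ₂ : ℝ → ℝ)
    (hd1 : Differentiable ℝ ψ₁) (hd2 : Differentiable ℝ ψ₂)
    (heq1 : ∀ ξ, deriv ψ₁ ξ = (1 + θ₀ + ε) * ψ₂ ξ)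
    (heq2 : ∀ ξ, deriv ψ₂ ξ = (1 + θ₀ - ε) * ψ₁ ξ)
    (a b : ℝ) (ha : ψ₁ a ≠ 0) (hb : ψ₁ b ≠ 0)
    (Pa Pb : ℝ) (hPa : Pa = -ψ₂ a / ψ₁ a) (hPb : Pb = -ψ₂ b / ψ₁ b) :
    (Pa - Pb) * Real.cos (κ * (b - a)) +
      (lam + Pa * Pb / lam) * Real.sin (κ * (b - a)) = 0 := by
  have hlam_pos : 0 < lam := hlam ▸ sqrt_pos.2 (div_pos h2 h1)
  have hlam_mul : lam * (ε + θ₀ + 1) = κ := by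
    rw [hlam, hκ, sqrt_div_mul_self h1]
    congr 1
    ring
  have hlam_mul_κ : lam * κ = ε - θ₀ - 1 := by
    rw [← hlam_mul, ← mul_assoc, hlam, mul_self_sqrt (div_pos h2 h1).le]
    field_simp
  have hx : ∀ ξ, HasDerivAt ψ₁ (κ * (ψ₂ ξ / lam)) ξ := fun ξ =>
    (hd1 ξ).hasDerivAt.congr_deriv <| by
      rw [heq1, ← hlam_mul]
      field_simp
      ring
  have hy : ∀ ξ, HasDerivAt (fun ξ => ψ₂ ξ / lam) (-(κ * ψ₁ ξ)) ξ := fun ξ =>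
    ((hd2 ξ).hasDerivAt.div_const lam).congr_deriv <| by
      rw [heq2, div_eq_iff hlam_pos.ne']
      linear_combination ψ₁ ξ * hlam_mul_κ
  have hcross := rotation_cross_mul_cos_add_inner_mul_sin hx hy a b
  rw [hPa, hPb]
  field_simp [hlam_pos.ne'] at hcross ⊢
  linear_combination hcross

/-- The algebraic content of the recurrence formula (Eq. 5 of the paper) relating the
logarithmic-derivative data of the wave function at the two ends of a constant-potential
segment. -/
theorem dirac_recurrence_identity
    (θ₀ ε : ℝ) (h1 : ε + θ₀ + 1 > 0) (h2 : ε - θ₀ - 1 > 0)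
    (κ lam : ℝ)
    (hκ : κ = Real.sqrt (ε ^ 2 - (1 + θ₀) ^ 2))
    (hlam : lam = Real.sqrt ((ε - θ₀ - 1) / (ε + θ₀ + 1)))
    (ψ₁ ψ₂ : ℝ → ℝ)
    (hd1 : Differentiable ℝ ψ₁) (hd2 : Differentiable ℝ ψ₂)
    (heq1 : ∀ ξ, deriv ψ₁ ξ = (1 + θ₀ + ε) * ψ₂ ξ)
    (heq2 : ∀ ξ, deriv ψ₂ ξ = (1 + θ₀ - ε) * ψ₁ ξ)
    (a b : ℝ) (hab : a < b) (ha : ψ₁ a ≠ 0) (hb : ψ₁ b ≠ 0)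
    (Pa Pb : ℝ) (hPa : Pa = -ψ₂ a / ψ₁ a) (hPb : Pb = -ψ₂ b / ψ₁ b) :
    (Pa - Pb) * Real.cos (κ * (b - a)) +
      (lam + Pa * Pb / lam) * Real.sin (κ * (b - a)) = 0 :=
  dirac_recurrence_identity_general θ₀ ε h1 h2 κ lam hκ hlam ψ₁ ψ₂ hd1 hd2 heq1 heq2 a b ha hb Pa Pb
    hPa hPb
end

section
/- Let α, β, α', β' be 2×2 complex matrices that are Hermitian and satisfy α² = β² = α'² = β'² = I and αβ + βα = 0 = α'β' + β'α'. Then there exists a unitary 2×2 complex matrix S such that α = S⁻¹ α' S and β = S⁻¹ β' S. -/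
/-!
Since `α` anticommutes with the invertible `β`, `α ≠ -1`, so the involution `α` has a unit
eigenvector `e` for the eigenvalue `1`. Then `f = β e` is a unit eigenvector of `α` for `-1`, hence
orthogonal to `e`, and `β f = e`. In the orthonormal basis `(e, f)` the pair `(α, β)` becomes the
pair of Pauli matrices `(σ_z, σ_x)`; so any two such pairs are unitarily conjugate through
`(σ_z, σ_x)`.
-/

open Matrix
open scoped ComplexOrder

lemma eq_star_mul_mul_of_mul_eq_mul {M : Type*} [Monoid M] [StarMul M] {U U' A A' D : M}
    (hU : U ∈ unitary M) (hU' : U' ∈ unitary M) (h : A * U = U * D) (h' : A' * U' = U' * D) :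
    A = star (U' * star U) * A' * (U' * star U) :=
  calc A = A * U * star U := by rw [mul_assoc, Unitary.mul_star_self_of_mem hU, mul_one]
    _ = U * (star U' * (A' * U')) * star U := by
      rw [h, h', ← mul_assoc (star U'), Unitary.star_mul_self_of_mem hU', one_mul]
    _ = star (U' * star U) * A' * (U' * star U) := by simp only [star_mul, star_star, mul_assoc]

namespace Matrix

variable {n : Type*} [Fintype n]

lemma mul_transpose_of {R m ι : Type*} [NonUnitalNonAssocSemiring R] (M : Matrix m n R)
    (v : ι → n → R) : M * (of v)ᵀ = (of fun j => M *ᵥ v j)ᵀ :=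
  rfl

lemma conjTranspose_transpose_of_mul_transpose_of {R m : Type*} [NonUnitalSemiring R] [StarRing R]
    (v : m → n → R) : (of v)ᵀᴴ * (of v)ᵀ = of fun i j => star (v i) ⬝ᵥ v j :=
  rfl

lemma exists_ne_zero_mulVec_eq_self_of_anticomm {K : Type*} [Field K] [NeZero (2 : K)]
    [DecidableEq n] {α β : Matrix n n K} (hα2 : α * α = 1) (hβ : β ≠ 0)
    (hanti : α * β + β * α = 0) : ∃ v ≠ 0, α *ᵥ v = v := by
  have hα : 1 + α ≠ 0 := by
    intro h
    rw [eq_neg_of_add_eq_zero_right h, neg_one_mul, mul_neg_one, ← neg_add, ← two_smul K,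
      neg_eq_zero, smul_eq_zero] at hanti
    exact hanti.elim (NeZero.ne 2) hβ
  obtain ⟨w, hw⟩ : ∃ w, (1 + α) *ᵥ w ≠ 0 := by
    by_contra! h
    exact hα (ext_iff_mulVec.mpr (by simpa using h))
  exact ⟨_, hw, by rw [mulVec_mulVec, mul_add, mul_one, hα2, add_comm]⟩

variable {𝕜 : Type*} [RCLike 𝕜]

lemma exists_star_smul_dotProduct_smul_eq_one {v : n → 𝕜} (hv : v ≠ 0) :
    ∃ c : 𝕜, star (c • v) ⬝ᵥ (c • v) = 1 := by
  obtain ⟨s, hs, hsv⟩ := RCLike.pos_iff_exists_ofReal.mp (dotProduct_star_self_pos_iff.mpr hv)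
  refine ⟨((√s)⁻¹ : ℝ), ?_⟩
  rw [star_smul, smul_dotProduct, dotProduct_smul, ← hsv, RCLike.star_def, RCLike.conj_ofReal]
  simp only [smul_eq_mul, ← RCLike.ofReal_mul]
  rw [← mul_assoc, ← mul_inv, Real.mul_self_sqrt hs.le, inv_mul_cancel₀ hs.ne', RCLike.ofReal_one]

lemma IsHermitian.star_dotProduct_mulVec {A : Matrix n n 𝕜} (hA : A.IsHermitian) (v w : n → 𝕜) :
    star v ⬝ᵥ (A *ᵥ w) = star (A *ᵥ v) ⬝ᵥ w := by
  rw [dotProduct_mulVec, star_mulVec, hA.eq]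

theorem exists_unitary_mul_eq_mul_pauli {α β : Matrix (Fin 2) (Fin 2) 𝕜}
    (hα : α.IsHermitian) (hβ : β.IsHermitian) (hα2 : α * α = 1) (hβ2 : β * β = 1)
    (hanti : α * β + β * α = 0) :
    ∃ V ∈ unitaryGroup (Fin 2) 𝕜, α * V = V * !![1, 0; 0, -1] ∧ β * V = V * !![0, 1; 1, 0] := by
  have hβ0 : β ≠ 0 := by
    rintro rfl
    simp at hβ2
  obtain ⟨v, hv, hαv⟩ := exists_ne_zero_mulVec_eq_self_of_anticomm hα2 hβ0 hanti
  obtain ⟨c, hc⟩ := exists_star_smul_dotProduct_smul_eq_one hv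
  set e := c • v
  have hαe : α *ᵥ e = e := by rw [mulVec_smul, hαv]
  obtain ⟨f, hβe⟩ : ∃ f, β *ᵥ e = f := ⟨_, rfl⟩
  have hαf : α *ᵥ f = -f := by
    rw [← hβe, mulVec_mulVec, eq_neg_of_add_eq_zero_left hanti, neg_mulVec, ← mulVec_mulVec, hαe]
  have hβf : β *ᵥ f = e := by rw [← hβe, mulVec_mulVec, hβ2, one_mulVec]
  have hff : star f ⬝ᵥ f = 1 := by
    have h := hβ.star_dotProduct_mulVec f e
    rwa [hβe, hβf, hc] at h
  have hef : star e ⬝ᵥ f = 0 := by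
    have h := hα.star_dotProduct_mulVec e f
    rwa [hαf, hαe, dotProduct_neg, neg_eq_self] at h
  have hfe : star f ⬝ᵥ e = 0 := by rw [star_dotProduct, hef, star_zero]
  refine ⟨(of ![e, f])ᵀ, ?_, ?_, ?_⟩
  · rw [mem_unitaryGroup_iff', star_eq_conjTranspose, conjTranspose_transpose_of_mul_transpose_of]
    ext i j
    fin_cases i <;> fin_cases j <;> simp [-vec2_dotProduct, hc, hef, hfe, hff]
  · rw [mul_transpose_of]
    ext i j
    fin_cases j <;> simp [-mulVec_fin_two, mul_apply, hαe, hαf]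
  · rw [mul_transpose_of]
    ext i j
    fin_cases j <;> simp [-mulVec_fin_two, mul_apply, hβe, hβf]

end Matrix

/-- Pauli's fundamental theorem in the two-dimensional Hermitian case: any two
representations of the one-dimensional Dirac matrices are unitarily equivalent. -/
theorem pauli_fundamental_theorem
    (α β α' β' : Matrix (Fin 2) (Fin 2) ℂ)
    (hα : α.IsHermitian) (hβ : β.IsHermitian)
    (hα' : α'.IsHermitian) (hβ' : β'.IsHermitian)
    (hα2 : α * α = 1) (hβ2 : β * β = 1)
    (hα'2 : α' * α' = 1) (hβ'2 : β' * β' = 1)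
    (hanti : α * β + β * α = 0) (hanti' : α' * β' + β' * α' = 0) :
    ∃ S : Matrix (Fin 2) (Fin 2) ℂ,
      Sᴴ * S = 1 ∧ S * Sᴴ = 1 ∧ α = S⁻¹ * α' * S ∧ β = S⁻¹ * β' * S := by
  obtain ⟨V, hV, hαV, hβV⟩ := exists_unitary_mul_eq_mul_pauli hα hβ hα2 hβ2 hanti
  obtain ⟨V', hV', hα'V', hβ'V'⟩ := exists_unitary_mul_eq_mul_pauli hα' hβ' hα'2 hβ'2 hanti'
  have hS : V' * star V ∈ unitaryGroup (Fin 2) ℂ := mul_mem hV' (Unitary.star_mem hV)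
  have hS_inv : (V' * star V)⁻¹ = star (V' * star V) :=
    inv_eq_left_inv (Unitary.star_mul_self_of_mem hS)
  refine ⟨V' * star V, Unitary.star_mul_self_of_mem hS, Unitary.mul_star_self_of_mem hS, ?_, ?_⟩
    <;> rw [hS_inv]
  · exact eq_star_mul_mul_of_mul_eq_mul hV hV' hαV hα'V'
  · exact eq_star_mul_mul_of_mul_eq_mul hV hV' hβV hβ'V'
end

section
/- Let θ : ℝ → ℝ be continuous with 1 + θ(ξ) ≥ 0 for all ξ, let ε > 0, and let ξ_L < ξ_R satisfy 1 + θ(ξ_L) = 1 + θ(ξ_R) = ε. Let ψ₁, ψ₂ : ℝ → ℝ be a differentiable solution of ψ₁' = (1+θ+ε)ψ₂, ψ₂' = (1+θ−ε)ψ₁ such that ψ₁(ξ) → 0 and ψ₂(ξ) → 0 as ξ → ±∞, and such that ψ₁(ξ) ≠ 0 and ψ₂(ξ) ≠ 0 for all ξ ≥ ξ_R and all ξ ≤ ξ_L. Then ψ₁(ξ_R)·ψ₂(ξ_R) < 0 and ψ₁(ξ_L)·ψ₂(ξ_L) > 0; equivalently, P(ξ_L) < 0 < P(ξ_R) where P =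 −ψ₂/ψ₁. -/
/-!
With `g = ψ₁² - ψ₂²` and `h = ψ₁ ψ₂`, the Dirac system gives `g' = 4 ε h` and
`h' = (1 + θ) (ψ₁² + ψ₂²) - ε g`. If `h > 0` on a ray `[a, ∞)`, then `g` increases to its
limit `0`, so `g ≤ 0` there; hence `h' ≥ 0`, so `h` increases to its limit `0` and `h ≤ 0`,
a contradiction. Since `h` has no zero on `[ξ_R, ∞)` it is therefore negative there. The
reflection `ξ ↦ -ξ`, `(ψ₁, ψ₂) ↦ (ψ₁, -ψ₂)` maps solutions to solutions and turns the left
ray into a right ray, which gives `h(ξ_L) > 0`.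
-/

open Filter Set

theorem div_pos_iff_mul_pos {K : Type*} [Field K] [LinearOrder K] [IsStrictOrderedRing K]
    {a b : K} : 0 < b / a ↔ 0 < a * b := by
  rw [div_pos_iff, mul_pos_iff]
  tauto

theorem MonotoneOn.le_of_tendsto_atTop {α β : Type*} [SemilatticeSup α] [Nonempty α]
    [TopologicalSpace β] [Preorder β] [ClosedIciTopology β] {f : α → β} {a x : α} {l : β}
    (hf : MonotoneOn f (Ici a)) (hl : Tendsto f atTop (nhds l)) (hx : a ≤ x) : f x ≤ l :=
  ge_of_tendsto hl <| (eventually_ge_atTop x).mono fun _ hy => hf hx (hx.trans hy) hy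

theorem IsPreconnected.pos_of_ne_zero {X : Type*} [TopologicalSpace X] {s : Set X} {f : X → ℝ}
    (hs : IsPreconnected s) (hf : ContinuousOn f s) (hne : ∀ x ∈ s, f x ≠ 0) {a : X}
    (ha : a ∈ s) (hpos : 0 < f a) {x : X} (hx : x ∈ s) : 0 < f x := by
  by_contra! hle
  obtain ⟨y, hy, hy0⟩ := hs.intermediate_value hx ha hf ⟨hle, hpos.le⟩
  exact hne y hy hy0

def IsDiracSolution (θ : ℝ → ℝ) (ε : ℝ) (ψ₁ ψ₂ : ℝ → ℝ) : Prop :=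
  ∀ ξ, HasDerivAt ψ₁ ((1 + θ ξ + ε) * ψ₂ ξ) ξ ∧ HasDerivAt ψ₂ ((1 + θ ξ - ε) * ψ₁ ξ) ξ

namespace IsDiracSolution

variable {θ : ℝ → ℝ} {ε : ℝ} {ψ₁ ψ₂ : ℝ → ℝ}

theorem of_deriv (hd1 : Differentiable ℝ ψ₁) (hd2 : Differentiable ℝ ψ₂)
    (heq1 : ∀ ξ, deriv ψ₁ ξ = (1 + θ ξ + ε) * ψ₂ ξ)
    (heq2 : ∀ ξ, deriv ψ₂ ξ = (1 + θ ξ - ε) * ψ₁ ξ) : IsDiracSolution θ ε ψ₁ ψ₂ :=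
  fun ξ => ⟨heq1 ξ ▸ (hd1 ξ).hasDerivAt, heq2 ξ ▸ (hd2 ξ).hasDerivAt⟩

theorem comp_neg (hψ : IsDiracSolution θ ε ψ₁ ψ₂) :
    IsDiracSolution (fun ξ => θ (-ξ)) ε (fun ξ => ψ₁ (-ξ)) (fun ξ => -ψ₂ (-ξ)) := by
  intro ξ
  obtain ⟨h₁, h₂⟩ := hψ (-ξ)
  exact ⟨(h₁.comp ξ (hasDerivAt_neg ξ)).congr_deriv (by ring),
    (h₂.comp ξ (hasDerivAt_neg ξ)).neg.congr_deriv (by ring)⟩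

theorem hasDerivAt_sq_sub_sq (hψ : IsDiracSolution θ ε ψ₁ ψ₂) (ξ : ℝ) :
    HasDerivAt (fun x => ψ₁ x ^ 2 - ψ₂ x ^ 2) (4 * ε * (ψ₁ ξ * ψ₂ ξ)) ξ := by
  obtain ⟨h₁, h₂⟩ := hψ ξ
  exact ((h₁.pow 2).sub (h₂.pow 2)).congr_deriv (by norm_num; ring)

theorem hasDerivAt_mul (hψ : IsDiracSolution θ ε ψ₁ ψ₂) (ξ : ℝ) :
    HasDerivAt (fun x => ψ₁ x * ψ₂ x)
      ((1 + θ ξ) * (ψ₁ ξ ^ 2 + ψ₂ ξ ^ 2) - ε * (ψ₁ ξ ^ 2 - ψ₂ ξ ^ 2)) ξ := by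
  obtain ⟨h₁, h₂⟩ := hψ ξ
  exact (h₁.mul h₂).congr_deriv (by ring)

variable (hψ : IsDiracSolution θ ε ψ₁ ψ₂) (hθ : ∀ ξ, 0 ≤ 1 + θ ξ) (hε : 0 ≤ ε)
include hψ hθ hε

theorem not_forall_mul_pos_Ici (h₁ : Tendsto ψ₁ atTop (nhds 0)) (h₂ : Tendsto ψ₂ atTop (nhds 0))
    (a : ℝ) : ¬ ∀ ξ, a ≤ ξ → 0 < ψ₁ ξ * ψ₂ ξ := by
  intro hpos
  have hg : MonotoneOn (fun x => ψ₁ x ^ 2 - ψ₂ x ^ 2) (Ici a) :=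
    monotoneOn_of_hasDerivWithinAt_nonneg (convex_Ici a)
      (fun x _ => (hψ.hasDerivAt_sq_sub_sq x).continuousAt.continuousWithinAt)
      (fun x _ => (hψ.hasDerivAt_sq_sub_sq x).hasDerivWithinAt)
      (fun x hx => by have := hpos x (interior_subset hx); positivity)
  have hg_nonpos (x : ℝ) (hx : a ≤ x) : ψ₁ x ^ 2 - ψ₂ x ^ 2 ≤ 0 :=
    hg.le_of_tendsto_atTop (by simpa using (h₁.pow 2).sub (h₂.pow 2)) hx
  have hh : MonotoneOn (fun x => ψ₁ x * ψ₂ x) (Ici a) :=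
    monotoneOn_of_hasDerivWithinAt_nonneg (convex_Ici a)
      (fun x _ => (hψ.hasDerivAt_mul x).continuousAt.continuousWithinAt)
      (fun x _ => (hψ.hasDerivAt_mul x).hasDerivWithinAt)
      fun x hx => sub_nonneg.2 <| (mul_nonpos_of_nonneg_of_nonpos hε
        (hg_nonpos x (interior_subset hx))).trans (mul_nonneg (hθ x) (by positivity))
  have := hh.le_of_tendsto_atTop (by simpa using h₁.mul h₂) le_rfl
  exact (hpos a le_rfl).not_ge this

theorem mul_neg_of_forall_Ici_ne_zero (h₁ : Tendsto ψ₁ atTop (nhds 0))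
    (h₂ : Tendsto ψ₂ atTop (nhds 0)) {a : ℝ} (hne : ∀ ξ, a ≤ ξ → ψ₁ ξ * ψ₂ ξ ≠ 0) :
    ψ₁ a * ψ₂ a < 0 := by
  refine (hne a le_rfl).lt_or_gt.resolve_right fun hpos => ?_
  refine hψ.not_forall_mul_pos_Ici hθ hε h₁ h₂ a fun ξ hξ => ?_
  exact isPreconnected_Ici.pos_of_ne_zero
    (fun x _ => (hψ.hasDerivAt_mul x).continuousAt.continuousWithinAt) hne (le_refl a) hpos hξ

theorem mul_pos_of_forall_Iic_ne_zero (h₁ : Tendsto ψ₁ atBot (nhds 0))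
    (h₂ : Tendsto ψ₂ atBot (nhds 0)) {a : ℝ} (hne : ∀ ξ, ξ ≤ a → ψ₁ ξ * ψ₂ ξ ≠ 0) :
    0 < ψ₁ a * ψ₂ a := by
  have := hψ.comp_neg.mul_neg_of_forall_Ici_ne_zero (fun ξ => hθ (-ξ)) hε
    (h₁.comp tendsto_neg_atTop_atBot) (by simpa using (h₂.comp tendsto_neg_atTop_atBot).neg)
    (a := -a) fun ξ hξ => by simpa using hne (-ξ) (neg_le.1 hξ)
  simpa using this

end IsDiracSolution

theorem dirac_P_sign_at_turning_points_general
    (θ : ℝ → ℝ) (hθ0 : ∀ ξ, 1 + θ ξ ≥ 0)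
    (ε : ℝ) (hε : 0 < ε)
    (ξL ξR : ℝ)
    (ψ₁ ψ₂ : ℝ → ℝ)
    (hd1 : Differentiable ℝ ψ₁) (hd2 : Differentiable ℝ ψ₂)
    (heq1 : ∀ ξ, deriv ψ₁ ξ = (1 + θ ξ + ε) * ψ₂ ξ)
    (heq2 : ∀ ξ, deriv ψ₂ ξ = (1 + θ ξ - ε) * ψ₁ ξ)
    (hdecay1top : Tendsto ψ₁ atTop (nhds 0)) (hdecay1bot : Tendsto ψ₁ atBot (nhds 0))
    (hdecay2top : Tendsto ψ₂ atTop (nhds 0)) (hdecay2bot : Tendsto ψ₂ atBot (nhds 0))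
    (hnozero : ∀ ξ, (ξ ≤ ξL ∨ ξR ≤ ξ) → ψ₁ ξ ≠ 0 ∧ ψ₂ ξ ≠ 0) :
    ψ₁ ξR * ψ₂ ξR < 0 ∧ ψ₁ ξL * ψ₂ ξL > 0 ∧
      -ψ₂ ξL / ψ₁ ξL < 0 ∧ 0 < -ψ₂ ξR / ψ₁ ξR := by
  have hψ := IsDiracSolution.of_deriv hd1 hd2 heq1 heq2
  have hR : ψ₁ ξR * ψ₂ ξR < 0 :=
    hψ.mul_neg_of_forall_Ici_ne_zero hθ0 hε.le hdecay1top hdecay2top fun ξ hξ =>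
      mul_ne_zero_iff.2 (hnozero ξ (Or.inr hξ))
  have hL : 0 < ψ₁ ξL * ψ₂ ξL :=
    hψ.mul_pos_of_forall_Iic_ne_zero hθ0 hε.le hdecay1bot hdecay2bot fun ξ hξ =>
      mul_ne_zero_iff.2 (hnozero ξ (Or.inl hξ))
  refine ⟨hR, hL, ?_, ?_⟩
  · rwa [neg_div, neg_neg_iff_pos, div_pos_iff_mul_pos]
  · rwa [div_pos_iff_mul_pos, mul_neg, neg_pos]

/-- Proposition (A.2) of Appendix A: for a bound state, `P(ξ_L) < 0 < P(ξ_R)` at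
the effective turning points. -/
theorem dirac_P_sign_at_turning_points
    (θ : ℝ → ℝ) (hθ : Continuous θ) (hθ0 : ∀ ξ, 1 + θ ξ ≥ 0)
    (ε : ℝ) (hε : 0 < ε)
    (ξL ξR : ℝ) (hLR : ξL < ξR)
    (hTL : 1 + θ ξL = ε) (hTR : 1 + θ ξR = ε)
    (ψ₁ ψ₂ : ℝ → ℝ)
    (hd1 : Differentiable ℝ ψ₁) (hd2 : Differentiable ℝ ψ₂)
    (heq1 : ∀ ξ, deriv ψ₁ ξ = (1 + θ ξ + ε) * ψ₂ ξ)
    (heq2 : ∀ ξ, deriv ψ₂ ξ = (1 + θ ξ - ε) * ψ₁ ξ)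
    (hdecay1top : Tendsto ψ₁ atTop (nhds 0)) (hdecay1bot : Tendsto ψ₁ atBot (nhds 0))
    (hdecay2top : Tendsto ψ₂ atTop (nhds 0)) (hdecay2bot : Tendsto ψ₂ atBot (nhds 0))
    (hnozero : ∀ ξ, (ξ ≤ ξL ∨ ξR ≤ ξ) → ψ₁ ξ ≠ 0 ∧ ψ₂ ξ ≠ 0) :
    ψ₁ ξR * ψ₂ ξR < 0 ∧ ψ₁ ξL * ψ₂ ξL > 0 ∧
      -ψ₂ ξL / ψ₁ ξL < 0 ∧ 0 < -ψ₂ ξR / ψ₁ ξR :=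
  dirac_P_sign_at_turning_points_general θ hθ0 ε hε ξL ξR ψ₁ ψ₂ hd1 hd2 heq1 heq2 hdecay1top
    hdecay1bot hdecay2top hdecay2bot hnozero
end

section
/- Let θ : ℝ → ℝ be continuous with 1 + θ(ξ) ≥ 0 for all ξ, let ε > 0, and let ξ_R ∈ ℝ. Let ψ₁, ψ₂ : ℝ → ℝ be a not-identically-zero differentiable solution of ψ₁' = (1+θ+ε)ψ₂, ψ₂' = (1+θ−ε)ψ₁ such that ψ₁(ξ) → 0 as ξ → ∞ and ψ₂(ξ) ≠ 0 for all ξ > ξ_R. Then ψ₁(ξ_R) ≠ 0. Symmetrically, if ψ₁(ξ) → 0 as ξ → −∞ and ψ₂(ξ) ≠ 0 for all ξ < ξ_L, then ψ₁(ξ_L) ≠ 0. -/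
/-!
By the Dirac equation `ψ₁' = (1 + θ + ε) ψ₂` with `1 + θ + ε > 0`, the derivative of `ψ₁` does
not vanish where `ψ₂` does not. By Darboux's theorem it then has constant sign there, so `ψ₁` is
strictly monotone on the closed half-line starting at the turning point. A strictly monotone
function that vanishes at the end point of the half-line cannot tend to `0` at infinity.
-/

open Filter Set Topology

lemma StrictMonoOn.lt_of_tendsto_atTop {f : ℝ → ℝ} {a l : ℝ} (hf : StrictMonoOn f (Ici a))
    (hl : Tendsto f atTop (𝓝 l)) : f a < l := by
  have hle : f (a + 1) ≤ l := by
    refine ge_of_tendsto hl ?_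
    filter_upwards [eventually_ge_atTop (a + 1)] with x hx
    exact hf.monotoneOn (by simp) (by simp; linarith) hx
  exact (hf self_mem_Ici (by simp) (by linarith)).trans_le hle

lemma StrictAntiOn.lt_of_tendsto_atTop {f : ℝ → ℝ} {a l : ℝ} (hf : StrictAntiOn f (Ici a))
    (hl : Tendsto f atTop (𝓝 l)) : l < f a :=
  neg_lt_neg_iff.mp (hf.neg.lt_of_tendsto_atTop hl.neg)

lemma ne_of_tendsto_atTop_of_deriv_ne_zero {f : ℝ → ℝ} (hf : Differentiable ℝ f) {a l : ℝ}
    (hf' : ∀ x, a < x → deriv f x ≠ 0) (hl : Tendsto f atTop (𝓝 l)) : f a ≠ l := by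
  have hcont : ContinuousOn f (Ici a) := hf.continuous.continuousOn
  rcases hasDerivWithinAt_forall_lt_or_forall_gt_of_forall_ne (convex_Ioi a)
      (fun x _ => (hf x).hasDerivAt.hasDerivWithinAt) hf' with hneg | hpos
  · have hanti : StrictAntiOn f (Ici a) :=
      strictAntiOn_of_deriv_neg (convex_Ici a) hcont (by simpa using hneg)
    exact (hanti.lt_of_tendsto_atTop hl).ne'
  · have hmono : StrictMonoOn f (Ici a) :=
      strictMonoOn_of_deriv_pos (convex_Ici a) hcont (by simpa using hpos)
    exact (hmono.lt_of_tendsto_atTop hl).ne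

lemma ne_of_tendsto_atBot_of_deriv_ne_zero {f : ℝ → ℝ} (hf : Differentiable ℝ f) {a l : ℝ}
    (hf' : ∀ x, x < a → deriv f x ≠ 0) (hl : Tendsto f atBot (𝓝 l)) : f a ≠ l := by
  have hreflect := ne_of_tendsto_atTop_of_deriv_ne_zero (f := fun x => f (-x)) (a := -a)
    (hf.comp differentiable_neg)
    (fun x hx => by rw [deriv_comp_neg]; exact neg_ne_zero.mpr (hf' (-x) (by linarith)))
    (hl.comp tendsto_neg_atTop_atBot)
  simpa using hreflect

theorem dirac_turning_point_not_node_general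
    (θ : ℝ → ℝ) (hθ0 : ∀ ξ, 1 + θ ξ ≥ 0)
    (ε : ℝ) (hε : 0 < ε)
    (ψ₁ ψ₂ : ℝ → ℝ)
    (hd1 : Differentiable ℝ ψ₁)
    (heq1 : ∀ ξ, deriv ψ₁ ξ = (1 + θ ξ + ε) * ψ₂ ξ) :
    (∀ ξR : ℝ, Tendsto ψ₁ atTop (nhds 0) → (∀ ξ, ξR < ξ → ψ₂ ξ ≠ 0) → ψ₁ ξR ≠ 0) ∧
    (∀ ξL : ℝ, Tendsto ψ₁ atBot (nhds 0) → (∀ ξ, ξ < ξL → ψ₂ ξ ≠ 0) → ψ₁ ξL ≠ 0) := by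
  have hderiv_ne_zero : ∀ ξ, ψ₂ ξ ≠ 0 → deriv ψ₁ ξ ≠ 0 := fun ξ hξ => by
    rw [heq1]
    exact mul_ne_zero (by linarith [hθ0 ξ]) hξ
  exact ⟨fun ξR hlim hnz => ne_of_tendsto_atTop_of_deriv_ne_zero hd1
      (fun ξ hξ => hderiv_ne_zero ξ (hnz ξ hξ)) hlim,
    fun ξL hlim hnz => ne_of_tendsto_atBot_of_deriv_ne_zero hd1
      (fun ξ hξ => hderiv_ne_zero ξ (hnz ξ hξ)) hlim⟩

/-- Inequality (A.6) of Appendix A: an effective turning point cannot be a node of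
`ψ₁`, so `P = -ψ₂/ψ₁` is finite there. -/
theorem dirac_turning_point_not_node
    (θ : ℝ → ℝ) (hθ : Continuous θ) (hθ0 : ∀ ξ, 1 + θ ξ ≥ 0)
    (ε : ℝ) (hε : 0 < ε)
    (ψ₁ ψ₂ : ℝ → ℝ)
    (hd1 : Differentiable ℝ ψ₁) (hd2 : Differentiable ℝ ψ₂)
    (heq1 : ∀ ξ, deriv ψ₁ ξ = (1 + θ ξ + ε) * ψ₂ ξ)
    (heq2 : ∀ ξ, deriv ψ₂ ξ = (1 + θ ξ - ε) * ψ₁ ξ)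
    (hnontriv : ∃ ξ, ψ₁ ξ ≠ 0 ∨ ψ₂ ξ ≠ 0) :
    (∀ ξR : ℝ, Tendsto ψ₁ atTop (nhds 0) → (∀ ξ, ξR < ξ → ψ₂ ξ ≠ 0) → ψ₁ ξR ≠ 0) ∧
    (∀ ξL : ℝ, Tendsto ψ₁ atBot (nhds 0) → (∀ ξ, ξ < ξL → ψ₂ ξ ≠ 0) → ψ₁ ξL ≠ 0) :=
  dirac_turning_point_not_node_general θ hθ0 ε hε ψ₁ ψ₂ hd1 heq1
end
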